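/- arXiv:1403.7856 — 6 statements merged into one kernel-verified Lean document; each statement's English description precedes it below -/
import Mathlib

section
/- Let V be a seminormed vector space over a complete nonarchimedean valued field k with nontrivial rank-1 valuation, and let V̂ denote its completion. For any k(1)-submodule W ⊆ V with W^{ac} = V(1), the closure Ŵ of the image of W in V̂ satisfies Ŵ^{ac} = V̂(1), and the canonical map from the inverse limit lim_{0<r<1} W/k(r)W to Ŵ is an isomorphism of topological k(1)-modules. -/
open Pointwise UniformSpace

/-!
STATEMENT 3: Let `V` be a seminormed vector space over a complete nonarchimedean
nontrivially valued field `k`, `V̂` its completion, and `W ⊆ V` a `k(1)`-submodule with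
`W^{ac} = V(1)`.  Then the closure `Ŵ` of the image of `W` in `V̂` satisfies
`Ŵ^{ac} = V̂(1)`, and the canonical map `lim_{0<r<1} W/k(r)W → Ŵ` is an isomorphism of
topological `k(1)`-modules (stated as: an additive homeomorphism from the inverse limit of
the discrete quotients `W/k(r)W` onto `Ŵ` compatible with the canonical maps from `W`).
-/

def kball (k : Type*) [NormedField k] (r : ℝ) : Set k := {c | ‖c‖ ≤ r}

/-- The additive subgroup `k(r)W` generated by products `c • w`, `|c| ≤ r`, `w ∈ W`. -/
def krW (k : Type*) [NormedField k] {V : Type*} [SeminormedAddCommGroup V]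
    [NormedSpace k V] (W : AddSubgroup V) (r : ℝ) : AddSubgroup V :=
  AddSubgroup.closure (kball k r • (W : Set V))

lemma krW_mono (k : Type*) [NormedField k] {V : Type*} [SeminormedAddCommGroup V]
    [NormedSpace k V] (W : AddSubgroup V) {r r' : ℝ} (h : r' ≤ r) :
    krW k W r' ≤ krW k W r := by
  apply AddSubgroup.closure_mono
  rintro x ⟨c, hc, v, hv, rfl⟩
  exact ⟨c, le_trans hc h, v, hv, rfl⟩

/-- The quotient `W/k(r)W`. -/
def QW (k : Type*) [NormedField k] {V : Type*} [SeminormedAddCommGroup V]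
    [NormedSpace k V] (W : AddSubgroup V) (r : ℝ) : Type _ :=
  W ⧸ ((krW k W r).addSubgroupOf W)

instance (k : Type*) [NormedField k] {V : Type*} [SeminormedAddCommGroup V]
    [NormedSpace k V] (W : AddSubgroup V) (r : ℝ) : AddCommGroup (QW k W r) := by
  unfold QW; infer_instance

/-- Transition maps `W/k(r')W → W/k(r)W` for `r' ≤ r`. -/
def QWmap (k : Type*) [NormedField k] {V : Type*} [SeminormedAddCommGroup V]
    [NormedSpace k V] (W : AddSubgroup V) {r r' : ℝ} (h : r' ≤ r) :
    QW k W r' →+ QW k W r :=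
  QuotientAddGroup.map _ _ (AddMonoidHom.id W) (by
    intro x hx
    exact krW_mono k W h hx)

/-- The inverse limit `lim_{0<r<1} W/k(r)W` as a subset of the product. -/
def QWlim (k : Type*) [NormedField k] {V : Type*} [SeminormedAddCommGroup V]
    [NormedSpace k V] (W : AddSubgroup V) : Set (Π r : Set.Ioo (0 : ℝ) 1, QW k W r.1) :=
  {f | ∀ (r r' : Set.Ioo (0 : ℝ) 1) (h : r'.1 ≤ r.1), QWmap k W h (f r') = f r}


/-!
The hypothesis `W^{ac} = V(1)` squeezes `W` between the open and the closed unit ball of `V`.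
Hence, for `0 < r < 1`, the subgroup `k(r)W` lies in the closed ball of radius `r` and contains
the open ball of radius `|c|` for every `c ≠ 0` with `|c| ≤ r`. So representatives of a compatible
family of cosets `(f r)` form a Cauchy net, whose limit in `V̂` is within `r` of every
representative of `f r`; conversely a point of `Ŵ` determines at level `r` the coset of any element
of `W` close enough to it. The two maps are inverse to each other, and since closeness at scale `r`
in `V̂` amounts to agreement at level `r`, both are continuous.
For `Ŵ^{ac}`, approximate `x ∈ V̂(1)` by some `c w ∈ V(1)` with `w ∈ W`, `1 ≤ |c| ≤ r`: then
`c⁻¹ x` lies within distance `1` of `w`, and that ball is contained in `Ŵ`.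
-/

open Metric Filter Topology

instance UniformSpace.Completion.isUltrametricDist {α : Type*} [PseudoMetricSpace α]
    [IsUltrametricDist α] : IsUltrametricDist (Completion α) where
  dist_triangle_max x y z := by
    induction x, y, z using Completion.induction_on₃ with
    | hp =>
      exact isClosed_le (by fun_prop)
        (Continuous.max (by fun_prop) (by fun_prop))
    | ih a b c =>
      simp only [Completion.dist_eq]
      exact IsUltrametricDist.dist_triangle_max a b c

/-- `S^{ac}` in the notation of the statement. -/
def almostClosure (k : Type*) [NormedField k] {V : Type*} [SeminormedAddCommGroup V]
    [NormedSpace k V] (S : Set V) : Set V :=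
  ⋂ r ∈ Set.Ioi (1 : ℝ), kball k r • S

section AlmostClosure

variable {k V : Type*} [NormedField k] [SeminormedAddCommGroup V] [NormedSpace k V]

lemma subset_almostClosure (S : Set V) : S ⊆ almostClosure k S := fun v hv =>
  Set.mem_iInter₂.2 fun r hr =>
    Set.mem_smul.2 ⟨1, by simpa [kball] using hr.le, v, hv, one_smul k v⟩

lemma almostClosure_subset_unitBall {S : Set V} (hS : ∀ v ∈ S, ‖v‖ ≤ 1) :
    almostClosure k S ⊆ {v | ‖v‖ ≤ 1} := by
  intro x hx
  show ‖x‖ ≤ 1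
  refine le_of_forall_gt_imp_ge_of_dense fun r hr => ?_
  obtain ⟨c, hc, v, hv, rfl⟩ := Set.mem_smul.1 (Set.mem_iInter₂.1 hx r hr)
  calc ‖c • v‖ = ‖c‖ * ‖v‖ := norm_smul c v
    _ ≤ r * 1 := mul_le_mul hc (hS v hv) (norm_nonneg v) (by linarith)
    _ = r := mul_one r

variable {W : AddSubgroup V}

lemma norm_le_one_of_mem (hWac : almostClosure k (W : Set V) = {v : V | ‖v‖ ≤ 1})
    {w : V} (hw : w ∈ W) : ‖w‖ ≤ 1 := by
  have h := subset_almostClosure (k := k) (W : Set V) hw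
  rwa [hWac] at h

lemma exists_smul_eq_of_norm_le_one (hWac : almostClosure k (W : Set V) = {v : V | ‖v‖ ≤ 1})
    {r : ℝ} (hr : 1 < r) {v : V} (hv : ‖v‖ ≤ 1) : ∃ c : k, ‖c‖ ≤ r ∧ ∃ w ∈ W, c • w = v := by
  have hv' : v ∈ almostClosure k (W : Set V) := hWac ▸ hv
  exact Set.mem_smul.1 (Set.mem_iInter₂.1 hv' r hr)

lemma exists_one_le_norm_smul_eq (hWsmul : ∀ c ∈ kball k 1, ∀ v ∈ W, c • v ∈ W)
    (hWac : almostClosure k (W : Set V) = {v : V | ‖v‖ ≤ 1})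
    {r : ℝ} (hr : 1 < r) {v : V} (hv : ‖v‖ ≤ 1) :
    ∃ c : k, 1 ≤ ‖c‖ ∧ ‖c‖ ≤ r ∧ ∃ w ∈ W, c • w = v := by
  obtain ⟨c, hcr, w, hw, rfl⟩ := exists_smul_eq_of_norm_le_one hWac hr hv
  by_cases hc : ‖c‖ ≤ 1
  · exact ⟨1, by simp, by simpa using hr.le, c • w, hWsmul c hc w hw, one_smul k _⟩
  · exact ⟨c, (not_le.1 hc).le, hcr, w, hw, rfl⟩

lemma mem_of_one_lt_norm_of_norm_smul_le_one (hWsmul : ∀ c ∈ kball k 1, ∀ v ∈ W, c • v ∈ W)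
    (hWac : almostClosure k (W : Set V) = {v : V | ‖v‖ ≤ 1})
    {c : k} (hc : 1 < ‖c‖) {v : V} (hcv : ‖c • v‖ ≤ 1) : v ∈ W := by
  have hc₀ : c ≠ 0 := norm_pos_iff.1 (one_pos.trans hc)
  obtain ⟨d, hd, w, hw, hdw⟩ := exists_smul_eq_of_norm_le_one hWac hc hcv
  have hv : v = (c⁻¹ * d) • w := by rw [mul_smul, hdw, inv_smul_smul₀ hc₀]
  rw [hv]
  refine hWsmul _ ?_ w hw
  simpa [kball, norm_mul, inv_mul_le_iff₀ (one_pos.trans hc)] using hd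

end AlmostClosure

lemma mem_of_norm_lt_one {k V : Type*} [NontriviallyNormedField k] [SeminormedAddCommGroup V]
    [NormedSpace k V] {W : AddSubgroup V} (hWsmul : ∀ c ∈ kball k 1, ∀ v ∈ W, c • v ∈ W)
    (hWac : almostClosure k (W : Set V) = {v : V | ‖v‖ ≤ 1})
    {v : V} (hv : ‖v‖ < 1) : v ∈ W := by
  rcases (norm_nonneg v).eq_or_lt with hv₀ | hv₀
  · obtain ⟨c, hc⟩ := NormedField.exists_one_lt_norm k
    exact mem_of_one_lt_norm_of_norm_smul_le_one hWsmul hWac hc (by simp [norm_smul, ← hv₀])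
  · obtain ⟨c, hcr, w, hw, rfl⟩ :=
      exists_smul_eq_of_norm_le_one hWac (one_lt_inv₀ hv₀ |>.2 hv) hv.le
    by_cases hc : ‖c‖ ≤ 1
    · exact hWsmul c hc w hw
    · refine mem_of_one_lt_norm_of_norm_smul_le_one hWsmul hWac (not_le.1 hc) ?_
      calc ‖c • c • w‖ = ‖c‖ * ‖c • w‖ := norm_smul _ _
        _ ≤ ‖c • w‖⁻¹ * ‖c • w‖ := by gcongr
        _ = 1 := inv_mul_cancel₀ hv₀.ne'

section Quotients

variable {k V : Type*} [NormedField k] [SeminormedAddCommGroup V] [NormedSpace k V]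
  {W : AddSubgroup V} {r : ℝ}

lemma norm_le_of_mem_krW [IsUltrametricDist V] (hW₁ : ∀ w ∈ W, ‖w‖ ≤ 1) (hr : 0 ≤ r)
    {x : V} (hx : x ∈ krW k W r) : ‖x‖ ≤ r := by
  induction hx using AddSubgroup.closure_induction with
  | mem y hy =>
    obtain ⟨c, hc, w, hw, rfl⟩ := Set.mem_smul.1 hy
    calc ‖c • w‖ = ‖c‖ * ‖w‖ := norm_smul c w
      _ ≤ r * 1 := mul_le_mul hc (hW₁ w hw) (norm_nonneg w) hr
      _ = r := mul_one r
  | zero => simpa using hr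
  | add x y _ _ hx hy => exact (IsUltrametricDist.norm_add_le_max x y).trans (max_le hx hy)
  | neg x _ hx => simpa using hx

lemma mem_krW_of_norm_lt (hW₀ : ∀ v : V, ‖v‖ < 1 → v ∈ W) {c : k} (hc : c ≠ 0)
    (hcr : ‖c‖ ≤ r) {x : V} (hx : ‖x‖ < ‖c‖) : x ∈ krW k W r := by
  refine AddSubgroup.subset_closure
    (Set.mem_smul.2 ⟨c, hcr, c⁻¹ • x, hW₀ _ ?_, smul_inv_smul₀ hc x⟩)
  rwa [norm_smul, norm_inv, inv_mul_lt_one₀ (norm_pos_iff.2 hc)]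

lemma QW_mk_eq_mk_iff (w w' : W) :
    (QuotientAddGroup.mk w : QW k W r) = QuotientAddGroup.mk w' ↔
      (w : V) - w' ∈ krW k W r := by
  rw [QuotientAddGroup.eq, AddSubgroup.mem_addSubgroupOf, ← neg_mem_iff]
  simp [sub_eq_neg_add]

lemma norm_sub_le_of_QW_mk_eq_mk [IsUltrametricDist V] (hW₁ : ∀ w ∈ W, ‖w‖ ≤ 1) (hr : 0 ≤ r)
    {w w' : W} (h : (QuotientAddGroup.mk w : QW k W r) = QuotientAddGroup.mk w') :
    ‖(w : V) - w'‖ ≤ r :=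
  norm_le_of_mem_krW hW₁ hr ((QW_mk_eq_mk_iff w w').1 h)

lemma QW_mk_eq_mk_of_norm_sub_lt (hW₀ : ∀ v : V, ‖v‖ < 1 → v ∈ W) {c : k} (hc : c ≠ 0)
    (hcr : ‖c‖ ≤ r) {w w' : W} (h : ‖(w : V) - w'‖ < ‖c‖) :
    (QuotientAddGroup.mk w : QW k W r) = QuotientAddGroup.mk w' :=
  (QW_mk_eq_mk_iff w w').2 (mem_krW_of_norm_lt hW₀ hc hcr h)

lemma QWmap_mk {r' : ℝ} (h : r' ≤ r) (w : W) :
    QWmap k W h (QuotientAddGroup.mk w) = (QuotientAddGroup.mk w : QW k W r) :=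
  QuotientAddGroup.map_mk _ _ _ _ _

end Quotients

lemma exists_mem_Ioo_zero_one_lt {ε : ℝ} (hε : 0 < ε) : ∃ r : Set.Ioo (0 : ℝ) 1, r.1 < ε :=
  ⟨⟨min (ε / 2) 2⁻¹, by positivity, min_lt_of_right_lt (by norm_num)⟩,
    (min_le_left _ _).trans_lt (half_lt_self hε)⟩

lemma eq_of_forall_dist_le_of_mem_Ioo {α : Type*} [MetricSpace α] {x y : α}
    (h : ∀ r : Set.Ioo (0 : ℝ) 1, dist x y ≤ r) : x = y :=
  eq_of_forall_dist_le fun _ hε =>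
    let ⟨r, hr⟩ := exists_mem_Ioo_zero_one_lt hε
    (h r).trans hr.le

namespace QWlim

noncomputable def scale (n : ℕ) : Set.Ioo (0 : ℝ) 1 :=
  ⟨2⁻¹ ^ (n + 1), by positivity, pow_lt_one₀ (by norm_num) (by norm_num) n.succ_ne_zero⟩

lemma scale_antitone : Antitone fun n => (scale n : ℝ) := fun _ _ h =>
  pow_le_pow_of_le_one (by norm_num) (by norm_num) (Nat.succ_le_succ h)

lemma tendsto_scale : Tendsto (fun n => (scale n : ℝ)) atTop (𝓝 0) :=
  (tendsto_pow_atTop_nhds_zero_of_lt_one (by norm_num) (by norm_num)).comp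
    (tendsto_add_atTop_nat 1)

variable {k V : Type*} [NormedField k] [SeminormedAddCommGroup V] [NormedSpace k V]
  {W : AddSubgroup V}

lemma apply_eq_mk_of_le (f : QWlim k W) {r r' : Set.Ioo (0 : ℝ) 1} (h : r'.1 ≤ r.1)
    {w : W} (hw : f.1 r' = QuotientAddGroup.mk w) : f.1 r = QuotientAddGroup.mk w := by
  rw [← f.2 r r' h, hw, QWmap_mk]

lemma exists_mk_eq (f : QWlim k W) (r : Set.Ioo (0 : ℝ) 1) :
    ∃ w : W, f.1 r = QuotientAddGroup.mk w :=
  (QuotientAddGroup.mk_surjective (f.1 r)).imp fun _ h => h.symm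

noncomputable def rep (f : QWlim k W) (r : Set.Ioo (0 : ℝ) 1) : W :=
  (exists_mk_eq f r).choose

lemma apply_eq_mk_rep (f : QWlim k W) (r : Set.Ioo (0 : ℝ) 1) :
    f.1 r = QuotientAddGroup.mk (rep f r) :=
  (exists_mk_eq f r).choose_spec

noncomputable def toCompletion (f : QWlim k W) : Completion V :=
  limUnder atTop fun n => ((rep f (scale n) : V) : Completion V)

variable [IsUltrametricDist V]

lemma norm_rep_sub_le (hW₁ : ∀ w ∈ W, ‖w‖ ≤ 1) (f : QWlim k W) {r r' : Set.Ioo (0 : ℝ) 1}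
    (h : r'.1 ≤ r.1) {w : W} (hw : f.1 r = QuotientAddGroup.mk w) :
    ‖(rep f r' : V) - w‖ ≤ r := by
  refine norm_sub_le_of_QW_mk_eq_mk (k := k) hW₁ r.2.1.le ?_
  rw [← hw, apply_eq_mk_of_le f h (apply_eq_mk_rep f r')]

lemma tendsto_toCompletion (hW₁ : ∀ w ∈ W, ‖w‖ ≤ 1) (f : QWlim k W) :
    Tendsto (fun n => ((rep f (scale n) : V) : Completion V)) atTop (𝓝 (toCompletion f)) := by
  refine (cauchySeq_of_le_tendsto_0' _ (fun n m hnm => ?_) tendsto_scale).tendsto_limUnder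
  rw [dist_comm, Completion.dist_eq, dist_eq_norm]
  exact norm_rep_sub_le hW₁ f (scale_antitone hnm) (apply_eq_mk_rep f _)

lemma toCompletion_mem_closure (hW₁ : ∀ w ∈ W, ‖w‖ ≤ 1) (f : QWlim k W) :
    toCompletion f ∈ closure (((↑) : V → Completion V) '' W) :=
  mem_closure_of_tendsto (tendsto_toCompletion hW₁ f)
    (Eventually.of_forall fun n => ⟨_, (rep f (scale n)).2, rfl⟩)

lemma dist_toCompletion_le (hW₁ : ∀ w ∈ W, ‖w‖ ≤ 1) (f : QWlim k W) {r : Set.Ioo (0 : ℝ) 1}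
    {w : W} (hw : f.1 r = QuotientAddGroup.mk w) :
    dist (toCompletion f) (w : V) ≤ r := by
  refine le_of_tendsto ((tendsto_toCompletion hW₁ f).dist tendsto_const_nhds) ?_
  filter_upwards [tendsto_scale.eventually (ge_mem_nhds r.2.1)] with n hn
  rw [Completion.dist_eq, dist_eq_norm]
  exact norm_rep_sub_le hW₁ f hn hw

lemma dist_toCompletion_toCompletion_le (hW₁ : ∀ w ∈ W, ‖w‖ ≤ 1) {f g : QWlim k W}
    {r : Set.Ioo (0 : ℝ) 1} (h : f.1 r = g.1 r) :
    dist (toCompletion f) (toCompletion g) ≤ r := by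
  refine (dist_triangle_max _ ((rep f r : V) : Completion V) _).trans (max_le ?_ ?_)
  · exact dist_toCompletion_le hW₁ f (apply_eq_mk_rep f r)
  · rw [dist_comm]
    exact dist_toCompletion_le hW₁ g (h ▸ apply_eq_mk_rep f r)

lemma toCompletion_add (hW₁ : ∀ w ∈ W, ‖w‖ ≤ 1) {f g h : QWlim k W} (hfg : f.1 + g.1 = h.1) :
    toCompletion h = toCompletion f + toCompletion g := by
  refine eq_of_forall_dist_le_of_mem_Ioo fun r => ?_
  set w := rep f r + rep g r
  have hw : h.1 r = QuotientAddGroup.mk w := by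
    rw [← hfg, Pi.add_apply, apply_eq_mk_rep f, apply_eq_mk_rep g]
    rfl
  have hsum : dist (toCompletion f + toCompletion g) (w : V) ≤ r := by
    rw [AddSubgroup.coe_add, Completion.coe_add, dist_eq_norm, add_sub_add_comm]
    refine (IsUltrametricDist.norm_add_le_max _ _).trans (max_le ?_ ?_)
    · exact (dist_eq_norm _ _).symm.trans_le (dist_toCompletion_le hW₁ f (apply_eq_mk_rep f r))
    · exact (dist_eq_norm _ _).symm.trans_le (dist_toCompletion_le hW₁ g (apply_eq_mk_rep g r))
  rw [dist_comm] at hsum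
  exact (dist_triangle_max _ ((w : V) : Completion V) _).trans
    (max_le (dist_toCompletion_le hW₁ h hw) hsum)

lemma toCompletion_eq_of_forall_eq_mk (hW₁ : ∀ w ∈ W, ‖w‖ ≤ 1) {f : QWlim k W} {w : W}
    (hf : ∀ r, f.1 r = QuotientAddGroup.mk w) : toCompletion f = (w : V) :=
  eq_of_forall_dist_le_of_mem_Ioo fun r => dist_toCompletion_le hW₁ f (hf r)

end QWlim

lemma exists_dist_lt_norm_of_mem_closure {k V : Type*} [NontriviallyNormedField k]
    [SeminormedAddCommGroup V] {W : AddSubgroup V} {x : Completion V}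
    (hx : x ∈ closure (((↑) : V → Completion V) '' W)) {r : ℝ} (hr : 0 < r) :
    ∃ w : W, ∃ c : k, c ≠ 0 ∧ ‖c‖ ≤ r ∧ dist x (w : V) < ‖c‖ := by
  obtain ⟨c, hc₀, hcr⟩ := NormedField.exists_norm_lt k hr
  obtain ⟨_, ⟨w, hw, rfl⟩, hxw⟩ := Metric.mem_closure_iff.1 hx _ hc₀
  exact ⟨⟨w, hw⟩, c, norm_pos_iff.1 hc₀, hcr.le, hxw⟩

namespace QWlim

variable {k V : Type*} [NontriviallyNormedField k] [SeminormedAddCommGroup V] [NormedSpace k V]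
  {W : AddSubgroup V}

noncomputable def ofCompletion (x : closure (((↑) : V → Completion V) '' W))
    (r : Set.Ioo (0 : ℝ) 1) : QW k W r.1 :=
  QuotientAddGroup.mk (exists_dist_lt_norm_of_mem_closure (k := k) x.2 r.2.1).choose

lemma exists_ofCompletion_apply_eq_mk (x : closure (((↑) : V → Completion V) '' W))
    (r : Set.Ioo (0 : ℝ) 1) : ∃ w : W, ofCompletion (k := k) x r = QuotientAddGroup.mk w ∧
      ∃ c : k, c ≠ 0 ∧ ‖c‖ ≤ r ∧ dist x.1 (w : V) < ‖c‖ :=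
  ⟨_, rfl, (exists_dist_lt_norm_of_mem_closure (k := k) x.2 r.2.1).choose_spec⟩

variable [IsUltrametricDist V]

lemma ofCompletion_apply_eq_mk (hW₀ : ∀ v : V, ‖v‖ < 1 → v ∈ W)
    (x : closure (((↑) : V → Completion V) '' W)) {r : Set.Ioo (0 : ℝ) 1} {c : k} (hc : c ≠ 0)
    (hcr : ‖c‖ ≤ r) {w : W} (hw : dist x.1 (w : V) < ‖c‖) :
    ofCompletion (k := k) x r = QuotientAddGroup.mk w := by
  obtain ⟨w', hw', c', hc', hc'r, hc'x⟩ := exists_ofCompletion_apply_eq_mk (k := k) x r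
  have hlt : ‖(w' : V) - w‖ < max ‖c'‖ ‖c‖ := by
    rw [← dist_eq_norm, ← Completion.dist_eq]
    exact (dist_triangle_max _ x.1 _).trans_lt (max_lt_max (by rwa [dist_comm]) hw)
  rw [hw']
  rcases max_choice ‖c'‖ ‖c‖ with h | h <;> rw [h] at hlt
  · exact QW_mk_eq_mk_of_norm_sub_lt hW₀ hc' hc'r hlt
  · exact QW_mk_eq_mk_of_norm_sub_lt hW₀ hc hcr hlt

lemma ofCompletion_mem (hW₀ : ∀ v : V, ‖v‖ < 1 → v ∈ W)
    (x : closure (((↑) : V → Completion V) '' W)) : ofCompletion (k := k) x ∈ QWlim k W := by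
  intro r r' h
  obtain ⟨w, hw, c, hc, hcr, hcx⟩ := exists_ofCompletion_apply_eq_mk (k := k) x r'
  rw [hw, QWmap_mk, ofCompletion_apply_eq_mk hW₀ x hc (hcr.trans h) hcx]

lemma isLocallyConstant_ofCompletion_apply (hW₀ : ∀ v : V, ‖v‖ < 1 → v ∈ W)
    (r : Set.Ioo (0 : ℝ) 1) :
    IsLocallyConstant fun x : closure (((↑) : V → Completion V) '' W) =>
      ofCompletion (k := k) x r := by
  refine (IsLocallyConstant.iff_eventually_eq _).2 fun x => ?_
  obtain ⟨w, hw, c, hc, hcr, hcx⟩ := exists_ofCompletion_apply_eq_mk (k := k) x r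
  filter_upwards [Metric.ball_mem_nhds x (norm_pos_iff.2 hc)] with y hy
  rw [hw]
  exact ofCompletion_apply_eq_mk hW₀ y hc hcr ((dist_triangle_max _ x.1 _).trans_lt (max_lt hy hcx))

lemma ofCompletion_toCompletion (hW₁ : ∀ w ∈ W, ‖w‖ ≤ 1) (hW₀ : ∀ v : V, ‖v‖ < 1 → v ∈ W)
    (f : QWlim k W) : ofCompletion ⟨toCompletion f, toCompletion_mem_closure hW₁ f⟩ = f.1 := by
  funext r
  obtain ⟨c, hc₀, hcr⟩ := NormedField.exists_norm_lt k r.2.1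
  let r' : Set.Ioo (0 : ℝ) 1 := ⟨‖c‖ / 2, half_pos hc₀, (half_lt_self hc₀).trans (hcr.trans r.2.2)⟩
  have hr' : r'.1 < ‖c‖ := half_lt_self hc₀
  rw [apply_eq_mk_of_le f (hr'.trans hcr).le (apply_eq_mk_rep f r')]
  exact ofCompletion_apply_eq_mk hW₀ _ (norm_pos_iff.1 hc₀) hcr.le
    ((dist_toCompletion_le hW₁ f (apply_eq_mk_rep f r')).trans_lt hr')

lemma toCompletion_ofCompletion (hW₁ : ∀ w ∈ W, ‖w‖ ≤ 1)
    (x : closure (((↑) : V → Completion V) '' W)) (hx : ofCompletion (k := k) x ∈ QWlim k W) :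
    toCompletion ⟨ofCompletion x, hx⟩ = x.1 :=
  eq_of_forall_dist_le_of_mem_Ioo fun r => by
    obtain ⟨w, hw, c, -, hcr, hcx⟩ := exists_ofCompletion_apply_eq_mk (k := k) x r
    refine (dist_triangle_max _ ((w : V) : Completion V) _).trans (max_le ?_ ?_)
    · exact dist_toCompletion_le hW₁ ⟨_, hx⟩ hw
    · rw [dist_comm]
      exact hcx.le.trans hcr

variable [∀ r : Set.Ioo (0 : ℝ) 1, TopologicalSpace (QW k W r.1)]

lemma continuous_toCompletion [∀ r : Set.Ioo (0 : ℝ) 1, DiscreteTopology (QW k W r.1)]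
    (hW₁ : ∀ w ∈ W, ‖w‖ ≤ 1) : Continuous (toCompletion : QWlim k W → Completion V) := by
  refine Metric.continuous_iff'.2 fun f ε hε => ?_
  obtain ⟨r, hr⟩ := exists_mem_Ioo_zero_one_lt hε
  have hopen : IsOpen {g : QWlim k W | g.1 r = f.1 r} :=
    (isOpen_discrete {f.1 r}).preimage ((continuous_apply r).comp continuous_subtype_val)
  filter_upwards [hopen.mem_nhds rfl] with g hg
  exact (dist_toCompletion_toCompletion_le hW₁ hg).trans_lt hr

lemma continuous_ofCompletion (hW₀ : ∀ v : V, ‖v‖ < 1 → v ∈ W) :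
    Continuous fun x : closure (((↑) : V → Completion V) '' W) =>
      (⟨ofCompletion x, ofCompletion_mem hW₀ x⟩ : QWlim k W) :=
  (continuous_pi fun r => (isLocallyConstant_ofCompletion_apply hW₀ r).continuous).subtype_mk _

noncomputable def homeomorphClosure [∀ r : Set.Ioo (0 : ℝ) 1, DiscreteTopology (QW k W r.1)]
    (hW₁ : ∀ w ∈ W, ‖w‖ ≤ 1) (hW₀ : ∀ v : V, ‖v‖ < 1 → v ∈ W) :
    QWlim k W ≃ₜ closure (((↑) : V → Completion V) '' W) where
  toFun f := ⟨toCompletion f, toCompletion_mem_closure hW₁ f⟩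
  invFun x := ⟨ofCompletion x, ofCompletion_mem hW₀ x⟩
  left_inv f := Subtype.ext (ofCompletion_toCompletion hW₁ hW₀ f)
  right_inv x := Subtype.ext (toCompletion_ofCompletion hW₁ x _)
  continuous_toFun := (continuous_toCompletion hW₁).subtype_mk _
  continuous_invFun := continuous_ofCompletion hW₀

end QWlim

lemma ball_subset_closure_of_mem {V : Type*} [SeminormedAddCommGroup V] {W : AddSubgroup V}
    (hW₀ : ∀ v : V, ‖v‖ < 1 → v ∈ W) {w : V} (hw : w ∈ W) :
    ball (w : Completion V) 1 ⊆ closure (((↑) : V → Completion V) '' W) := by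
  refine (Completion.denseRange_coe.subset_closure_image_preimage_of_isOpen isOpen_ball).trans
    (closure_mono (Set.image_mono fun v hv => ?_))
  have hvw : ‖v - w‖ < 1 := by
    rwa [Set.mem_preimage, mem_ball, Completion.dist_eq, dist_eq_norm] at hv
  simpa using W.add_mem (hW₀ _ hvw) hw

lemma almostClosure_closure_eq {k V : Type*} [NontriviallyNormedField k] [SeminormedAddCommGroup V]
    [NormedSpace k V] [IsUltrametricDist V] {W : AddSubgroup V}
    (hWsmul : ∀ c ∈ kball k 1, ∀ v ∈ W, c • v ∈ W)
    (hWac : almostClosure k (W : Set V) = {v : V | ‖v‖ ≤ 1}) :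
    almostClosure k (closure (((↑) : V → Completion V) '' W)) = {x | ‖x‖ ≤ 1} := by
  refine (almostClosure_subset_unitBall fun x hx => ?_).antisymm fun x hx => ?_
  · refine closure_minimal ?_ (isClosed_le continuous_norm continuous_const) hx
    rintro _ ⟨w, hw, rfl⟩
    simpa [Completion.norm_coe] using norm_le_one_of_mem hWac hw
  refine Set.mem_iInter₂.2 fun r hr => ?_
  obtain ⟨v, hxv⟩ := Completion.denseRange_coe.exists_dist_lt x one_pos
  have hv : ‖v‖ ≤ 1 := by
    rw [← Completion.norm_coe, ← dist_zero_right]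
    refine (dist_triangle_max _ x 0).trans (max_le ?_ ?_)
    · rw [dist_comm]; exact hxv.le
    · rwa [dist_zero_right]
  obtain ⟨c, hc₁, hcr, w, hw, rfl⟩ := exists_one_le_norm_smul_eq hWsmul hWac hr hv
  have hc : c ≠ 0 := norm_pos_iff.1 (one_pos.trans_le hc₁)
  refine Set.mem_smul.2 ⟨c, hcr, c⁻¹ • x,
    ball_subset_closure_of_mem (fun _ => mem_of_norm_lt_one hWsmul hWac) hw ?_, smul_inv_smul₀ hc x⟩
  rw [mem_ball, dist_eq_norm]
  calc ‖c⁻¹ • x - w‖ = ‖c‖⁻¹ * dist x ↑(c • w) := by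
        rw [Completion.coe_smul, dist_eq_norm, ← norm_inv, ← norm_smul, smul_sub,
          inv_smul_smul₀ hc]
    _ ≤ dist x ↑(c • w) := mul_le_of_le_one_left dist_nonneg (inv_le_one_of_one_le₀ hc₁)
    _ < 1 := hxv

theorem stmt3_general {k V : Type*} [NontriviallyNormedField k]
    [SeminormedAddCommGroup V] [IsUltrametricDist V]
    [NormedSpace k V] (W : AddSubgroup V)
    (hWsmul : ∀ c ∈ kball k 1, ∀ v ∈ W, c • v ∈ W)
    (hWac : (⋂ r ∈ Set.Ioi (1 : ℝ), kball k r • (W : Set V)) = {v : V | ‖v‖ ≤ 1}) :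
    -- `Ŵ^{ac} = V̂(1)`
    (⋂ r ∈ Set.Ioi (1 : ℝ),
        kball k r • closure ((fun v : V => (v : Completion V)) '' (W : Set V))) =
      {v : Completion V | ‖v‖ ≤ 1} ∧
    -- the canonical map `lim_{0<r<1} W/k(r)W → Ŵ` is an isomorphism of topological
    -- (additive) groups, each quotient `W/k(r)W` carrying the discrete topology
    (letI : ∀ r : Set.Ioo (0 : ℝ) 1, TopologicalSpace (QW k W r.1) := fun _ => ⊥
     ∃ e : (QWlim k W) ≃ₜ
        (closure ((fun v : V => (v : Completion V)) '' (W : Set V))),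
      (∀ f g h : QWlim k W, f.1 + g.1 = h.1 →
        (e h : Completion V) = e f + e g) ∧
      (∀ (w : W) (f : QWlim k W),
        (∀ r : Set.Ioo (0 : ℝ) 1, f.1 r = QuotientAddGroup.mk w) →
        (e f : Completion V) = ((w : V) : Completion V))) := by
  have hW₁ : ∀ w ∈ W, ‖w‖ ≤ 1 := fun _ => norm_le_one_of_mem hWac
  have hW₀ : ∀ v : V, ‖v‖ < 1 → v ∈ W := fun _ => mem_of_norm_lt_one hWsmul hWac
  refine ⟨almostClosure_closure_eq hWsmul hWac, ?_⟩
  let : ∀ r : Set.Ioo (0 : ℝ) 1, TopologicalSpace (QW k W r.1) := fun _ => ⊥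
  have : ∀ r : Set.Ioo (0 : ℝ) 1, DiscreteTopology (QW k W r.1) := fun _ => ⟨rfl⟩
  exact ⟨QWlim.homeomorphClosure hW₁ hW₀, fun f g h => QWlim.toCompletion_add hW₁,
    fun w f => QWlim.toCompletion_eq_of_forall_eq_mk hW₁⟩

theorem stmt3 {k V : Type*} [NontriviallyNormedField k] [CompleteSpace k]
    [IsUltrametricDist k] [SeminormedAddCommGroup V] [IsUltrametricDist V]
    [NormedSpace k V] (W : AddSubgroup V)
    (hWsmul : ∀ c ∈ kball k 1, ∀ v ∈ W, c • v ∈ W)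
    (hWac : (⋂ r ∈ Set.Ioi (1 : ℝ), kball k r • (W : Set V)) = {v : V | ‖v‖ ≤ 1}) :
    -- `Ŵ^{ac} = V̂(1)`
    (⋂ r ∈ Set.Ioi (1 : ℝ),
        kball k r • closure ((fun v : V => (v : Completion V)) '' (W : Set V))) =
      {v : Completion V | ‖v‖ ≤ 1} ∧
    -- the canonical map `lim_{0<r<1} W/k(r)W → Ŵ` is an isomorphism of topological
    -- (additive) groups, each quotient `W/k(r)W` carrying the discrete topology
    (letI : ∀ r : Set.Ioo (0 : ℝ) 1, TopologicalSpace (QW k W r.1) := fun _ => ⊥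
     ∃ e : (QWlim k W) ≃ₜ
        (closure ((fun v : V => (v : Completion V)) '' (W : Set V))),
      (∀ f g h : QWlim k W, f.1 + g.1 = h.1 →
        (e h : Completion V) = e f + e g) ∧
      (∀ (w : W) (f : QWlim k W),
        (∀ r : Set.Ioo (0 : ℝ) 1, f.1 r = QuotientAddGroup.mk w) →
        (e f : Completion V) = ((w : V) : Completion V))) :=
  stmt3_general W hWsmul hWac
end

section
/- Suppose the value group |k^×| is dense in (0,∞). For any k(1)-submodule W of a k-vector space V, the adic closure W^{ac} = ⋂_{r>1} k(r)W coincides with the almost-elements module W_*^a = { v ∈ V : εv ∈ W for all ε ∈ k with |ε| < 1 }. -/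
open Pointwise

theorem stmt4 {k V : Type*} [DenselyNormedField k] [CompleteSpace k]
    [IsUltrametricDist k] [AddCommGroup V] [Module k V]
    (W : Set V)
    (hW0 : (0 : V) ∈ W)
    (hWadd : ∀ v ∈ W, ∀ w ∈ W, v + w ∈ W)
    (hWsmul : ∀ c ∈ kball k 1, ∀ v ∈ W, c • v ∈ W) :
    (⋂ r ∈ Set.Ioi (1 : ℝ), kball k r • W) =
      {v : V | ∀ ε : k, ‖ε‖ < 1 → ε • v ∈ W} := by
  ext v
  simp only [Set.mem_iInter, Set.mem_Ioi, Set.mem_setOf_eq]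
  constructor
  · intro h ε hε
    rcases eq_or_ne ε 0 with rfl | hε0
    · simpa using hW0
    · have hεpos : (0:ℝ) < ‖ε‖ := norm_pos_iff.mpr hε0
      have hr : (1:ℝ) < ‖ε‖⁻¹ := one_lt_inv_iff₀.mpr ⟨hεpos, hε⟩
      obtain ⟨c, hc, w, hw, rfl⟩ := h _ hr
      rw [smul_smul]
      refine hWsmul _ ?_ _ hw
      have : ‖ε * c‖ = ‖ε‖ * ‖c‖ := norm_mul _ _
      simp only [kball, Set.mem_setOf_eq, this]
      calc ‖ε‖ * ‖c‖ ≤ ‖ε‖ * ‖ε‖⁻¹ := by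
            exact mul_le_mul_of_nonneg_left hc (norm_nonneg _)
        _ = 1 := mul_inv_cancel₀ (ne_of_gt hεpos)
  · intro h r hr
    obtain ⟨ε, hε1, hε2⟩ := DenselyNormedField.lt_norm_lt (α := k) r⁻¹ 1
      (by positivity) (inv_lt_one_of_one_lt₀ hr)
    have hε0 : ε ≠ 0 := by
      intro h0; rw [h0, norm_zero] at hε1
      exact absurd hε1 (not_lt.mpr (by positivity))
    refine ⟨ε⁻¹, ?_, ε • v, h ε hε2, ?_⟩
    · simp only [kball, Set.mem_setOf_eq, norm_inv]
      rw [inv_le_comm₀ (norm_pos_iff.mpr hε0) (lt_trans one_pos hr)]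
      exact le_of_lt hε1
    · show ε⁻¹ • ε • v = v
      rw [smul_smul, inv_mul_cancel₀ hε0, one_smul]
end

section
/- Suppose the value group |k^×| is dense in (0,∞). For any Banach k-algebra A, the adic closure (A°)^{ac} of the subring of power-bounded elements coincides with { a ∈ A : ρ_A(a) ≤ 1 }, where ρ_A is the spectral radius function. -/
open Pointwise Filter

noncomputable def specRad {A : Type*} [NormedRing A] (a : A) : ℝ :=
  ⨅ n : ℕ+, ‖a ^ (n : ℕ)‖ ^ (((n : ℕ) : ℝ))⁻¹

def PowBdd {A : Type*} [NormedRing A] (a : A) : Prop := ∃ C : ℝ, ∀ n : ℕ, ‖a ^ n‖ ≤ C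

section SpectralRadius

variable {k A : Type*} [NormedRing A]

lemma specRad_le (a : A) (n : ℕ+) : specRad a ≤ ‖a ^ (n : ℕ)‖ ^ (((n : ℕ) : ℝ))⁻¹ :=
  ciInf_le ⟨0, by rintro x ⟨n, rfl⟩; positivity⟩ n

lemma specRad_smul [NormedField k] [NormedAlgebra k A] (c : k) (a : A) :
    specRad (c • a) = ‖c‖ * specRad a := by
  rw [specRad, specRad, Real.mul_iInf_of_nonneg (norm_nonneg c)]
  congr 1
  ext n
  rw [smul_pow, norm_smul, norm_pow, Real.mul_rpow (by positivity) (norm_nonneg _),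
    Real.pow_rpow_inv_natCast (norm_nonneg c) n.ne_zero]

lemma PowBdd.specRad_le_one {b : A} (hb : PowBdd b) : specRad b ≤ 1 := by
  obtain ⟨C, hC⟩ := hb
  have hC₁ : ∀ n, ‖b ^ n‖ ≤ max C 1 := fun n => (hC n).trans (le_max_left _ _)
  have hroot : Tendsto (fun n : ℕ => max C 1 ^ ((n : ℝ))⁻¹) atTop (nhds 1) := by
    have := ((Real.continuousAt_const_rpow (a := max C 1) (b := 0) (by positivity)).tendsto).comp
      (tendsto_inv_atTop_zero.comp tendsto_natCast_atTop_atTop)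
    simpa only [Real.rpow_zero, Function.comp_def] using this
  refine ge_of_tendsto hroot ?_
  filter_upwards [eventually_gt_atTop 0] with n hn
  exact (specRad_le b ⟨n, hn⟩).trans
    (Real.rpow_le_rpow (norm_nonneg _) (hC₁ n) (by positivity))

lemma exists_norm_pow_lt_of_specRad_lt {a : A} {t : ℝ} (ht : specRad a < t) :
    ∃ m : ℕ+, ‖a ^ (m : ℕ)‖ < t ^ (m : ℕ) := by
  obtain ⟨m, hm⟩ := exists_lt_of_ciInf_lt ht
  have ht₀ : 0 ≤ t := (Real.rpow_nonneg (norm_nonneg _) _).trans hm.le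
  refine ⟨m, ?_⟩
  rwa [Real.rpow_inv_lt_iff_of_pos (norm_nonneg _) ht₀ (by positivity), Real.rpow_natCast] at hm

end SpectralRadius

lemma exists_norm_pow_le_mul_pow {A : Type*} [SeminormedRing A] {a : A} {m : ℕ} {t : ℝ}
    (hm : 0 < m) (ht : 0 < t) (hma : ‖a ^ m‖ ≤ t ^ m) :
    ∃ M : ℝ, ∀ n, ‖a ^ n‖ ≤ M * t ^ n := by
  set M := ∑ s ∈ Finset.range m, ‖a ^ s‖ / t ^ s
  have hsmall : ∀ s < m, ‖a ^ s‖ ≤ M * t ^ s := fun s hs => by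
    rw [← div_le_iff₀ (by positivity)]
    exact Finset.single_le_sum (f := fun s => ‖a ^ s‖ / t ^ s) (fun _ _ => by positivity)
      (Finset.mem_range.mpr hs)
  refine ⟨M, fun n => ?_⟩
  induction n using Nat.strong_induction_on with
  | _ n ih =>
    rcases lt_or_ge n m with hn | hn
    · exact hsmall n hn
    obtain ⟨l, rfl⟩ := Nat.exists_eq_add_of_le hn
    calc ‖a ^ (m + l)‖ ≤ ‖a ^ m‖ * ‖a ^ l‖ := by rw [pow_add]; exact norm_mul_le _ _
      _ ≤ t ^ m * (M * t ^ l) :=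
          mul_le_mul hma (ih l (by omega)) (norm_nonneg _) (by positivity)
      _ = M * t ^ (m + l) := by ring

lemma powBdd_inv_smul {k A : Type*} [NormedField k] [NormedRing A] [NormedAlgebra k A]
    {a : A} {c : k} {M : ℝ} (hc : c ≠ 0) (h : ∀ n, ‖a ^ n‖ ≤ M * ‖c‖ ^ n) :
    PowBdd (c⁻¹ • a) :=
  ⟨M, fun n => by
    rw [smul_pow, norm_smul, norm_pow, norm_inv, inv_pow,
      inv_mul_le_iff₀ (pow_pos (norm_pos_iff.mpr hc) n), mul_comm]
    exact h n⟩

theorem stmt6_general {k A : Type*} [DenselyNormedField k] [NormedCommRing A] [NormedAlgebra k A] :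
    (⋂ r ∈ Set.Ioi (1 : ℝ), kball k r • {a : A | PowBdd a}) =
      {a : A | specRad a ≤ 1} := by
  ext a
  simp only [Set.mem_iInter, Set.mem_Ioi, Set.mem_ofPred_eq]
  constructor
  · intro h
    refine le_of_forall_gt_imp_ge_of_dense fun r hr => ?_
    obtain ⟨c, hc, b, hb, rfl⟩ := Set.mem_smul.mp (h r hr)
    rw [specRad_smul]
    exact (mul_le_of_le_one_right (norm_nonneg c) hb.specRad_le_one).trans hc
  · intro ha r hr
    obtain ⟨c, hc₁, hcr⟩ := NormedField.exists_lt_norm_lt k zero_le_one hr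
    have hc : c ≠ 0 := norm_pos_iff.mp (one_pos.trans hc₁)
    obtain ⟨m, hm⟩ := exists_norm_pow_lt_of_specRad_lt (ha.trans_lt hc₁)
    obtain ⟨M, hM⟩ := exists_norm_pow_le_mul_pow m.pos (one_pos.trans hc₁) hm.le
    exact Set.mem_smul.mpr ⟨c, hcr.le, c⁻¹ • a, powBdd_inv_smul hc hM, smul_inv_smul₀ hc a⟩

theorem stmt6 {k A : Type*} [DenselyNormedField k] [CompleteSpace k]
    [IsUltrametricDist k] [NormedCommRing A] [NormOneClass A] [IsUltrametricDist A]
    [NormedAlgebra k A] [CompleteSpace A] :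
    (⋂ r ∈ Set.Ioi (1 : ℝ), kball k r • {a : A | PowBdd a}) =
      {a : A | specRad a ≤ 1} :=
  stmt6_general
end

section
/- Let A be a Banach k-algebra over a complete nonarchimedean rank-1 valued field k with nontrivial valuation. For any open integrally closed k(1)-subalgebra A₀ ⊆ A, the adic closure A₀^{ac} = ⋂_{r>1} k(r)A₀ is again an open integrally closed k(1)-subalgebra of A. -/
/-!
Write `B = ⋂_{r>1} k(r)·A₀`. Each level `k(r)·A₀` is closed under addition, since
`c • a + d • b = d • ((d⁻¹ * c) • a + b)` when `‖c‖ ≤ ‖d‖`, and `k(r)·A₀ * k(s)·A₀ ⊆ k(rs)·A₀`;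
so `B` is a `k(1)`-subalgebra, and it is open because `B + A₀ = B`.
For integral closedness, fix `r > 1`. Either `k(r) = k(1)`, or some `c` has `1 < ‖c‖ ≤ r`;
in both cases there is `c` with `1 ≤ ‖c‖ ≤ r` and `B ⊆ k(‖c‖)·A₀`. If `a` is a root of a monic
`p` with coefficients in `B`, then `c⁻¹ a` is a root of `p.scaleRoots c⁻¹`, whose lower
coefficients `c^{i-n} pᵢ` lie in `k(‖c‖⁻¹)·k(‖c‖)·A₀ ⊆ A₀`, so `c⁻¹ a ∈ A₀` and `a ∈ k(r)·A₀`.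
-/

open Pointwise

open Polynomial

def adicClosure (k : Type*) {M : Type*} [NormedField k] [SMul k M] (M₀ : Set M) : Set M :=
  ⋂ r ∈ Set.Ioi (1 : ℝ), kball k r • M₀

section Module

variable {k M : Type*} [NormedField k] [AddCommGroup M] [Module k M] {M₀ : Set M}

theorem mem_adicClosure {x : M} : x ∈ adicClosure k M₀ ↔ ∀ r > (1 : ℝ), x ∈ kball k r • M₀ := by
  simp [adicClosure]

theorem subset_adicClosure : M₀ ⊆ adicClosure k M₀ := fun x hx =>
  mem_adicClosure.2 fun r hr => by
    simpa using Set.smul_mem_smul (show (1 : k) ∈ kball k r by simp [kball]; linarith) hx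

theorem smul_mem_kball_smul {r s : ℝ} {c : k} {x : M} (hc : c ∈ kball k s)
    (hx : x ∈ kball k r • M₀) : c • x ∈ kball k (s * r) • M₀ := by
  obtain ⟨d, hd, y, hy, rfl⟩ := Set.mem_smul.1 hx
  refine smul_smul c d y ▸ Set.smul_mem_smul ?_ hy
  simp only [kball, Set.mem_ofPred_eq, norm_mul] at hc hd ⊢
  exact mul_le_mul hc hd (norm_nonneg _) ((norm_nonneg _).trans hc)

theorem smul_mem_adicClosure {c : k} (hc : c ∈ kball k 1) {x : M} (hx : x ∈ adicClosure k M₀) :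
    c • x ∈ adicClosure k M₀ :=
  mem_adicClosure.2 fun r hr => one_mul r ▸ smul_mem_kball_smul hc (mem_adicClosure.1 hx r hr)

theorem neg_mem_adicClosure {x : M} (hx : x ∈ adicClosure k M₀) : -x ∈ adicClosure k M₀ := by
  simpa using smul_mem_adicClosure (show (-1 : k) ∈ kball k 1 by simp [kball]) hx

theorem add_mem_kball_smul (hadd : ∀ x ∈ M₀, ∀ y ∈ M₀, x + y ∈ M₀)
    (hsmul : ∀ c ∈ kball k 1, ∀ x ∈ M₀, c • x ∈ M₀) {r : ℝ} {x y : M}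
    (hx : x ∈ kball k r • M₀) (hy : y ∈ kball k r • M₀) : x + y ∈ kball k r • M₀ := by
  suffices key : ∀ c : k, ∀ d ∈ kball k r, ∀ a ∈ M₀, ∀ b ∈ M₀, ‖c‖ ≤ ‖d‖ →
      c • a + d • b ∈ kball k r • M₀ by
    obtain ⟨c, hc, a, ha, rfl⟩ := Set.mem_smul.1 hx
    obtain ⟨d, hd, b, hb, rfl⟩ := Set.mem_smul.1 hy
    rcases le_total ‖c‖ ‖d‖ with hcd | hdc
    · exact key c d hd a ha b hb hcd
    · exact add_comm (d • b) (c • a) ▸ key d c hc b hb a ha hdc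
  intro c d hd a ha b hb hcd
  -- when `d = 0` also `c = 0`, so this holds for all `d`
  have hc_eq : d * (d⁻¹ * c) = c := by
    rcases eq_or_ne d 0 with rfl | hd0
    · simpa using (norm_le_zero_iff.1 (by simpa using hcd)).symm
    · rw [mul_inv_cancel_left₀ hd0]
  have hquot : d⁻¹ * c ∈ kball k 1 := by
    simpa [kball, norm_mul, norm_inv] using inv_mul_le_one_of_le₀ hcd (norm_nonneg d)
  have hsum : c • a + d • b = d • ((d⁻¹ * c) • a + b) := by
    rw [smul_add, smul_smul, hc_eq]
  exact hsum ▸ Set.smul_mem_smul hd (hadd _ (hsmul _ hquot a ha) b hb)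

theorem add_mem_adicClosure (hadd : ∀ x ∈ M₀, ∀ y ∈ M₀, x + y ∈ M₀)
    (hsmul : ∀ c ∈ kball k 1, ∀ x ∈ M₀, c • x ∈ M₀) {x y : M}
    (hx : x ∈ adicClosure k M₀) (hy : y ∈ adicClosure k M₀) : x + y ∈ adicClosure k M₀ :=
  mem_adicClosure.2 fun r hr =>
    add_mem_kball_smul hadd hsmul (mem_adicClosure.1 hx r hr) (mem_adicClosure.1 hy r hr)

theorem isOpen_adicClosure [TopologicalSpace M] [ContinuousAdd M]
    (hadd : ∀ x ∈ M₀, ∀ y ∈ M₀, x + y ∈ M₀) (hsmul : ∀ c ∈ kball k 1, ∀ x ∈ M₀, c • x ∈ M₀)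
    (h0 : (0 : M) ∈ M₀) (hopen : IsOpen M₀) : IsOpen (adicClosure k M₀) := by
  have hB : adicClosure k M₀ + M₀ = adicClosure k M₀ :=
    (Set.add_subset_iff.2 fun x hx y hy => add_mem_adicClosure hadd hsmul hx
      (subset_adicClosure hy)).antisymm (Set.subset_add_left _ h0)
  exact hB ▸ hopen.add_left

theorem exists_adicClosure_subset_kball_norm_smul {r : ℝ} (hr : 1 < r) :
    ∃ c : k, 1 ≤ ‖c‖ ∧ ‖c‖ ≤ r ∧ adicClosure k M₀ ⊆ kball k ‖c‖ • M₀ := by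
  by_cases h : ∃ c : k, 1 < ‖c‖ ∧ ‖c‖ ≤ r
  · obtain ⟨c, hc1, hcr⟩ := h
    exact ⟨c, hc1.le, hcr, fun x hx => mem_adicClosure.1 hx _ hc1⟩
  · push Not at h
    have hball : kball k r ⊆ kball k 1 := fun c hc => not_lt.1 fun hc1 => (h c hc1).not_ge hc
    refine ⟨1, by simp, by simpa using hr.le, fun x hx => ?_⟩
    simpa using Set.smul_subset_smul_right hball (mem_adicClosure.1 hx r hr)

end Module

section Algebra

variable {k A : Type*} [NormedField k] [CommRing A] [Algebra k A] {A₀ : Set A}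

theorem mul_mem_kball_smul (hmul : ∀ x ∈ A₀, ∀ y ∈ A₀, x * y ∈ A₀) {r s : ℝ} {x y : A}
    (hx : x ∈ kball k r • A₀) (hy : y ∈ kball k s • A₀) : x * y ∈ kball k (r * s) • A₀ := by
  obtain ⟨c, hc, a, ha, rfl⟩ := Set.mem_smul.1 hx
  obtain ⟨d, hd, b, hb, rfl⟩ := Set.mem_smul.1 hy
  refine smul_mul_smul_comm c a d b ▸ Set.smul_mem_smul ?_ (hmul a ha b hb)
  simp only [kball, Set.mem_ofPred_eq, norm_mul] at hc hd ⊢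
  exact mul_le_mul hc hd (norm_nonneg _) ((norm_nonneg _).trans hc)

theorem mul_mem_adicClosure (hmul : ∀ x ∈ A₀, ∀ y ∈ A₀, x * y ∈ A₀) {x y : A}
    (hx : x ∈ adicClosure k A₀) (hy : y ∈ adicClosure k A₀) : x * y ∈ adicClosure k A₀ := by
  refine mem_adicClosure.2 fun r hr => ?_
  have hsqrt : 1 < √r := Real.lt_sqrt_of_sq_lt (by simpa using hr)
  simpa [Real.mul_self_sqrt (zero_le_one.trans hr.le)] using
    mul_mem_kball_smul hmul (mem_adicClosure.1 hx _ hsqrt) (mem_adicClosure.1 hy _ hsqrt)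

theorem coeff_scaleRoots_inv_mem (h1 : (1 : A) ∈ A₀)
    (hsmul : ∀ c ∈ kball k 1, ∀ x ∈ A₀, c • x ∈ A₀) {c : k} (hc : 1 ≤ ‖c‖) {p : A[X]}
    (hp : p.Monic) (hcoef : ∀ i, p.coeff i ∈ kball k ‖c‖ • A₀ ∪ {0}) (i : ℕ) :
    (p.scaleRoots (algebraMap k A c⁻¹)).coeff i ∈ A₀ ∪ {0} := by
  rw [coeff_scaleRoots]
  rcases lt_trichotomy i p.natDegree with hi | rfl | hi
  · obtain ⟨d, hd, x, hx, hdx⟩ | hzero := hcoef i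
    · left
      have hnorm : ‖d * c⁻¹ ^ (p.natDegree - i)‖ ≤ 1 := by
        have hinv : ‖c‖⁻¹ ≤ 1 := inv_le_one_of_one_le₀ hc
        calc ‖d * c⁻¹ ^ (p.natDegree - i)‖ = ‖d‖ * ‖c‖⁻¹ ^ (p.natDegree - i) := by
              rw [norm_mul, norm_pow, norm_inv]
          _ ≤ ‖c‖ * ‖c‖⁻¹ := by
              gcongr
              exacts [hd, pow_le_of_le_one (by positivity) hinv (by omega)]
          _ = 1 := mul_inv_cancel₀ (by positivity)
      convert hsmul _ hnorm x hx using 1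
      rw [← hdx, ← map_pow, ← Algebra.commutes, ← Algebra.smul_def, smul_smul, mul_comm]
    · exact Or.inr (by simp [Set.mem_singleton_iff.1 hzero])
  · exact Or.inl (by simpa [hp.coeff_natDegree] using h1)
  · exact Or.inr (by simp [coeff_eq_zero_of_natDegree_lt hi])

theorem mem_smul_set_of_monic_eval_eq_zero (h1 : (1 : A) ∈ A₀)
    (hsmul : ∀ c ∈ kball k 1, ∀ x ∈ A₀, c • x ∈ A₀)
    (hic : ∀ a : A, (∃ p : A[X], p.Monic ∧ (∀ i, p.coeff i ∈ A₀ ∪ {0}) ∧ p.eval a = 0) → a ∈ A₀)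
    {c : k} (hc : 1 ≤ ‖c‖) {p : A[X]} (hp : p.Monic)
    (hcoef : ∀ i, p.coeff i ∈ kball k ‖c‖ • A₀ ∪ {0}) {a : A} (ha : p.eval a = 0) :
    a ∈ c • A₀ := by
  have hc0 : c ≠ 0 := norm_pos_iff.1 (zero_lt_one.trans_le hc)
  have hroot : (p.scaleRoots (algebraMap k A c⁻¹)).eval (c⁻¹ • a) = 0 := by
    rw [Algebra.smul_def]
    exact scaleRoots_eval₂_eq_zero (RingHom.id A) ha
  have hmem : c⁻¹ • a ∈ A₀ := hic _ ⟨_, (monic_scaleRoots_iff _).2 hp,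
    coeff_scaleRoots_inv_mem h1 hsmul hc hp hcoef, hroot⟩
  exact Set.mem_smul_set.2 ⟨_, hmem, smul_inv_smul₀ hc0 a⟩

theorem mem_adicClosure_of_monic_eval_eq_zero (h1 : (1 : A) ∈ A₀)
    (hsmul : ∀ c ∈ kball k 1, ∀ x ∈ A₀, c • x ∈ A₀)
    (hic : ∀ a : A, (∃ p : A[X], p.Monic ∧ (∀ i, p.coeff i ∈ A₀ ∪ {0}) ∧ p.eval a = 0) → a ∈ A₀)
    {p : A[X]} (hp : p.Monic) (hcoef : ∀ i, p.coeff i ∈ adicClosure k A₀ ∪ {0}) {a : A}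
    (ha : p.eval a = 0) : a ∈ adicClosure k A₀ := by
  refine mem_adicClosure.2 fun r hr => ?_
  obtain ⟨c, hc1, hcr, hB⟩ := exists_adicClosure_subset_kball_norm_smul (k := k) (M₀ := A₀) hr
  obtain ⟨x, hx, rfl⟩ := Set.mem_smul_set.1 <| mem_smul_set_of_monic_eval_eq_zero h1 hsmul hic
    hc1 hp (fun i => Set.union_subset_union_left _ hB (hcoef i)) ha
  exact Set.smul_mem_smul hcr hx

end Algebra

theorem stmt7_general {k A : Type*} [NontriviallyNormedField k] [NormedCommRing A]
    [NormedAlgebra k A]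
    (A₀ : Set A)
    (h1 : (1 : A) ∈ A₀)
    (hadd : ∀ x ∈ A₀, ∀ y ∈ A₀, x + y ∈ A₀)
    (hmul : ∀ x ∈ A₀, ∀ y ∈ A₀, x * y ∈ A₀)
    (hsmul : ∀ c ∈ kball k 1, ∀ x ∈ A₀, c • x ∈ A₀)
    (hopen : IsOpen A₀)
    (hic : ∀ a : A, (∃ p : Polynomial A, p.Monic ∧ (∀ i, p.coeff i ∈ A₀ ∪ {0}) ∧
        Polynomial.eval a p = 0) → a ∈ A₀) :
    (1 : A) ∈ (⋂ r ∈ Set.Ioi (1 : ℝ), kball k r • A₀) ∧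
    (∀ x ∈ (⋂ r ∈ Set.Ioi (1 : ℝ), kball k r • A₀),
      ∀ y ∈ (⋂ r ∈ Set.Ioi (1 : ℝ), kball k r • A₀),
        x + y ∈ (⋂ r ∈ Set.Ioi (1 : ℝ), kball k r • A₀) ∧
        x * y ∈ (⋂ r ∈ Set.Ioi (1 : ℝ), kball k r • A₀)) ∧
    (∀ x ∈ (⋂ r ∈ Set.Ioi (1 : ℝ), kball k r • A₀),
        -x ∈ (⋂ r ∈ Set.Ioi (1 : ℝ), kball k r • A₀)) ∧
    (∀ c ∈ kball k 1, ∀ x ∈ (⋂ r ∈ Set.Ioi (1 : ℝ), kball k r • A₀),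
        c • x ∈ (⋂ r ∈ Set.Ioi (1 : ℝ), kball k r • A₀)) ∧
    IsOpen (⋂ r ∈ Set.Ioi (1 : ℝ), kball k r • A₀) ∧
    (∀ a : A, (∃ p : Polynomial A, p.Monic ∧
        (∀ i, p.coeff i ∈ (⋂ r ∈ Set.Ioi (1 : ℝ), kball k r • A₀) ∪ {0}) ∧
        Polynomial.eval a p = 0) → a ∈ (⋂ r ∈ Set.Ioi (1 : ℝ), kball k r • A₀)) := by
  have h0 : (0 : A) ∈ A₀ := by simpa using hsmul 0 (by simp [kball]) 1 h1
  refine ⟨subset_adicClosure h1, fun x hx y hy => ⟨add_mem_adicClosure hadd hsmul hx hy,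
    mul_mem_adicClosure hmul hx hy⟩, fun x hx => neg_mem_adicClosure hx,
    fun c hc x hx => smul_mem_adicClosure hc hx, isOpen_adicClosure hadd hsmul h0 hopen, ?_⟩
  rintro a ⟨p, hp, hcoef, ha⟩
  exact mem_adicClosure_of_monic_eval_eq_zero h1 hsmul hic hp hcoef ha

theorem stmt7 {k A : Type*} [NontriviallyNormedField k] [CompleteSpace k]
    [IsUltrametricDist k] [NormedCommRing A] [NormOneClass A] [IsUltrametricDist A]
    [NormedAlgebra k A] [CompleteSpace A]
    (A₀ : Set A)
    (h1 : (1 : A) ∈ A₀)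
    (hadd : ∀ x ∈ A₀, ∀ y ∈ A₀, x + y ∈ A₀)
    (hmul : ∀ x ∈ A₀, ∀ y ∈ A₀, x * y ∈ A₀)
    (hneg : ∀ x ∈ A₀, -x ∈ A₀)
    (hsmul : ∀ c ∈ kball k 1, ∀ x ∈ A₀, c • x ∈ A₀)
    (hopen : IsOpen A₀)
    (hic : ∀ a : A, (∃ p : Polynomial A, p.Monic ∧ (∀ i, p.coeff i ∈ A₀ ∪ {0}) ∧
        Polynomial.eval a p = 0) → a ∈ A₀) :
    (1 : A) ∈ (⋂ r ∈ Set.Ioi (1 : ℝ), kball k r • A₀) ∧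
    (∀ x ∈ (⋂ r ∈ Set.Ioi (1 : ℝ), kball k r • A₀),
      ∀ y ∈ (⋂ r ∈ Set.Ioi (1 : ℝ), kball k r • A₀),
        x + y ∈ (⋂ r ∈ Set.Ioi (1 : ℝ), kball k r • A₀) ∧
        x * y ∈ (⋂ r ∈ Set.Ioi (1 : ℝ), kball k r • A₀)) ∧
    (∀ x ∈ (⋂ r ∈ Set.Ioi (1 : ℝ), kball k r • A₀),
        -x ∈ (⋂ r ∈ Set.Ioi (1 : ℝ), kball k r • A₀)) ∧
    (∀ c ∈ kball k 1, ∀ x ∈ (⋂ r ∈ Set.Ioi (1 : ℝ), kball k r • A₀),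
        c • x ∈ (⋂ r ∈ Set.Ioi (1 : ℝ), kball k r • A₀)) ∧
    IsOpen (⋂ r ∈ Set.Ioi (1 : ℝ), kball k r • A₀) ∧
    (∀ a : A, (∃ p : Polynomial A, p.Monic ∧
        (∀ i, p.coeff i ∈ (⋂ r ∈ Set.Ioi (1 : ℝ), kball k r • A₀) ∪ {0}) ∧
        Polynomial.eval a p = 0) → a ∈ (⋂ r ∈ Set.Ioi (1 : ℝ), kball k r • A₀)) :=
  stmt7_general A₀ h1 hadd hmul hsmul hopen hic
end

section
/- For any Banach function algebra A over a complete nonarchimedean rank-1 valued field k with nontrivial valuation, the subring A° of power-bounded elements is adically closed (A° = ⋂_{r>1} k(r)A°) and coincides with the closed unit ball with respect to the spectral radius function ρ_A. -/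
open Pointwise

section NormedRing

variable {A : Type*} [NormedRing A]

lemma specRad_nonneg (a : A) : 0 ≤ specRad a :=
  le_ciInf fun _ => Real.rpow_nonneg (norm_nonneg _) _

lemma specRad_le_norm_pow_rpow (a : A) {n : ℕ} (hn : n ≠ 0) :
    specRad a ≤ ‖a ^ n‖ ^ (n : ℝ)⁻¹ :=
  ciInf_le (f := fun m : ℕ+ => ‖a ^ (m : ℕ)‖ ^ ((m : ℕ) : ℝ)⁻¹)
    ⟨0, by rintro _ ⟨m, rfl⟩; exact Real.rpow_nonneg (norm_nonneg _) _⟩ ⟨n, Nat.pos_of_ne_zero hn⟩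

lemma le_specRad {a : A} {x : ℝ} (h : ∀ n : ℕ, n ≠ 0 → x ≤ ‖a ^ n‖ ^ (n : ℝ)⁻¹) :
    x ≤ specRad a :=
  le_ciInf fun n => h n n.ne_zero

lemma specRad_pow_le_norm_pow (a : A) {n : ℕ} (hn : n ≠ 0) : specRad a ^ n ≤ ‖a ^ n‖ :=
  calc specRad a ^ n ≤ (‖a ^ n‖ ^ (n : ℝ)⁻¹) ^ n :=
        pow_le_pow_left₀ (specRad_nonneg a) (specRad_le_norm_pow_rpow a hn) n
    _ = ‖a ^ n‖ := Real.rpow_inv_natCast_pow (norm_nonneg _) hn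

lemma specRad_pow_le (a : A) {n : ℕ} (hn : n ≠ 0) : specRad (a ^ n) ≤ specRad a ^ n := by
  have hn' : (0 : ℝ) < n := by positivity
  rw [← Real.rpow_natCast, ← Real.rpow_inv_le_iff_of_pos (specRad_nonneg _) (specRad_nonneg a) hn']
  refine le_specRad fun j hj => ?_
  rw [Real.rpow_inv_le_iff_of_pos (specRad_nonneg _) (by positivity) hn', Real.rpow_natCast]
  calc specRad (a ^ n) ≤ ‖(a ^ n) ^ j‖ ^ (j : ℝ)⁻¹ := specRad_le_norm_pow_rpow _ hj
    _ ≤ (‖a ^ j‖ ^ n) ^ (j : ℝ)⁻¹ := by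
        rw [← pow_mul, mul_comm, pow_mul]
        gcongr
        exact norm_pow_le' _ (Nat.pos_of_ne_zero hn)
    _ = (‖a ^ j‖ ^ (j : ℝ)⁻¹) ^ n := by
        rw [← Real.rpow_natCast, ← Real.rpow_natCast, ← Real.rpow_mul (norm_nonneg _),
          ← Real.rpow_mul (norm_nonneg _), mul_comm]

lemma specRad_le_one_of_powBdd {a : A} (ha : PowBdd a) : specRad a ≤ 1 := by
  obtain ⟨C, hC⟩ := ha
  by_contra! h
  obtain ⟨n, hn⟩ := pow_unbounded_of_one_lt C h
  have := (specRad_pow_le_norm_pow a n.succ_ne_zero).trans (hC _)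
  linarith [pow_le_pow_right₀ h.le n.le_succ]

lemma powBdd_of_specRad_le_one {C : ℝ} (hC : 0 ≤ C) (hρ : ∀ a : A, ‖a‖ ≤ C * specRad a) {a : A}
    (ha : specRad a ≤ 1) : PowBdd a := by
  refine ⟨max C ‖(1 : A)‖, fun n => ?_⟩
  rcases eq_or_ne n 0 with rfl | hn
  · simp
  calc ‖a ^ n‖ ≤ C * specRad (a ^ n) := hρ _
    _ ≤ C * 1 := by
        gcongr
        exact (specRad_pow_le a hn).trans (pow_le_one₀ (specRad_nonneg a) ha)
    _ ≤ max C ‖(1 : A)‖ := by simp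

lemma specRad_smul_le {k : Type*} [NormedField k] [NormedAlgebra k A] (c : k) (a : A) :
    specRad (c • a) ≤ ‖c‖ * specRad a := by
  simp only [specRad]
  rw [Real.mul_iInf_of_nonneg (norm_nonneg c)]
  refine le_ciInf fun n => (specRad_le_norm_pow_rpow _ n.ne_zero).trans ?_
  calc ‖(c • a) ^ (n : ℕ)‖ ^ ((n : ℕ) : ℝ)⁻¹
        ≤ (‖c‖ ^ (n : ℕ) * ‖a ^ (n : ℕ)‖) ^ ((n : ℕ) : ℝ)⁻¹ := by
        rw [smul_pow, ← norm_pow]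
        gcongr
        exact norm_smul_le _ _
    _ = ‖c‖ * ‖a ^ (n : ℕ)‖ ^ ((n : ℕ) : ℝ)⁻¹ := by
        rw [Real.mul_rpow (by positivity) (norm_nonneg _),
          Real.pow_rpow_inv_natCast (norm_nonneg _) n.ne_zero]

end NormedRing

theorem stmt11_general {k A : Type*} [NontriviallyNormedField k]
    [NormedCommRing A]
    [NormedAlgebra k A]
    (hBFA : ∃ C > 0, ∀ a : A, ‖a‖ ≤ C * specRad a) :
    {a : A | PowBdd a} = (⋂ r ∈ Set.Ioi (1 : ℝ), kball k r • {a : A | PowBdd a}) ∧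
    {a : A | PowBdd a} = {a : A | specRad a ≤ 1} := by
  obtain ⟨C, hC, hρ⟩ := hBFA
  have powBdd_iff (a : A) : PowBdd a ↔ specRad a ≤ 1 :=
    ⟨specRad_le_one_of_powBdd, powBdd_of_specRad_le_one hC.le hρ⟩
  refine ⟨Set.Subset.antisymm (fun a ha => Set.mem_iInter₂.2 fun r hr => ?_) fun a ha => ?_,
    Set.ext powBdd_iff⟩
  · exact ⟨1, by simpa [kball] using le_of_lt hr, a, ha, one_smul k a⟩
  · refine (powBdd_iff a).2 (le_of_forall_gt_imp_ge_of_dense fun r hr => ?_)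
    obtain ⟨c, hc, b, hb, rfl⟩ := Set.mem_iInter₂.1 ha r hr
    calc specRad (c • b) ≤ ‖c‖ * specRad b := specRad_smul_le c b
      _ ≤ r * 1 := by
          gcongr
          · exact specRad_nonneg b
          · exact hc
          · exact specRad_le_one_of_powBdd hb
      _ = r := mul_one r

theorem stmt11 {k A : Type*} [NontriviallyNormedField k] [CompleteSpace k]
    [IsUltrametricDist k] [NormedCommRing A] [NormOneClass A] [IsUltrametricDist A]
    [NormedAlgebra k A] [CompleteSpace A]
    (hBFA : ∃ C > 0, ∀ a : A, ‖a‖ ≤ C * specRad a) :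
    {a : A | PowBdd a} = (⋂ r ∈ Set.Ioi (1 : ℝ), kball k r • {a : A | PowBdd a}) ∧
    {a : A | PowBdd a} = {a : A | specRad a ≤ 1} :=
  stmt11_general hBFA
end

section
/- Suppose |k^×| is dense in (0,∞). Let A be a Banach affinoid ring over k (an affinoid ring (A^▷, A^+) where A^▷ is a complete f-adic Tate k-algebra admitting a ring of definition that is a k(1)-subalgebra). Then A is uniform (i.e. (A^▷)° is bounded) if and only if (A^▷, (A^+)^{ac}) is strongly uniform, i.e. (A^▷)° is bounded and equals (A^+)^{ac}. -/
open Pointwise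

theorem stmt19 {k A : Type*} [DenselyNormedField k] [CompleteSpace k]
    [IsUltrametricDist k] [NormedCommRing A] [NormOneClass A] [IsUltrametricDist A]
    [NormedAlgebra k A] [CompleteSpace A]
    (Aplus : Set A)
    (h1 : (1 : A) ∈ Aplus)
    (hadd : ∀ x ∈ Aplus, ∀ y ∈ Aplus, x + y ∈ Aplus)
    (hmul : ∀ x ∈ Aplus, ∀ y ∈ Aplus, x * y ∈ Aplus)
    (hneg : ∀ x ∈ Aplus, -x ∈ Aplus)
    (hsmul : ∀ c ∈ kball k 1, ∀ x ∈ Aplus, c • x ∈ Aplus)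
    (hopen : IsOpen Aplus)
    (hpb : Aplus ⊆ {a : A | PowBdd a})
    (hic : ∀ a : A, (∃ p : Polynomial A, p.Monic ∧ (∀ i, p.coeff i ∈ Aplus) ∧
        Polynomial.eval a p = 0) → a ∈ Aplus) :
    (∃ R > 0, ∀ a : A, PowBdd a → ‖a‖ ≤ R) ↔
      ((∃ R > 0, ∀ a : A, PowBdd a → ‖a‖ ≤ R) ∧
        (⋂ r ∈ Set.Ioi (1 : ℝ), kball k r • Aplus) = {a : A | PowBdd a}) := by
  constructor
  · intro hU
    refine ⟨hU, ?_⟩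
    obtain ⟨R, hR0, hR⟩ := hU
    ext a
    simp only [Set.mem_iInter, Set.mem_setOf_eq]
    constructor
    · intro ha
      refine ⟨R, fun n => ?_⟩
      have key : ∀ r ∈ Set.Ioi (1:ℝ), ‖a ^ n‖ ≤ r ^ n * R := by
        intro r hr
        obtain ⟨c, hc, x, hx, hcx⟩ := Set.mem_smul.mp (ha r hr)
        have hxpb : PowBdd (x ^ n) := by
          obtain ⟨C, hC⟩ := hpb hx
          exact ⟨C, fun m => by rw [← pow_mul]; exact hC _⟩
        have hxn : ‖x ^ n‖ ≤ R := hR _ hxpb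
        have hax : a ^ n = c ^ n • x ^ n := by rw [← hcx, smul_pow]
        rw [hax, norm_smul, norm_pow]
        have hcr : ‖c‖ ≤ r := hc
        have h1r : (0:ℝ) < r := lt_trans one_pos hr
        exact mul_le_mul (pow_le_pow_left₀ (norm_nonneg c) hcr n) hxn (norm_nonneg _)
          (by positivity)
      have ht : Filter.Tendsto (fun r : ℝ => r ^ n * R) (nhdsWithin 1 (Set.Ioi 1))
          (nhds R) := by
        have h2 : Filter.Tendsto (fun r : ℝ => r ^ n * R) (nhds 1) (nhds (1 ^ n * R)) :=
          ((continuous_pow n).mul continuous_const).tendsto 1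
        simpa using h2.mono_left nhdsWithin_le_nhds
      exact ge_of_tendsto ht
        (Filter.eventually_iff_exists_mem.mpr ⟨Set.Ioi 1, self_mem_nhdsWithin, key⟩)
    · intro ha r hr
      obtain ⟨c, hc1, hcr⟩ := NormedField.exists_lt_norm_lt k zero_le_one hr
      have hc0 : c ≠ 0 := by
        intro h; rw [h, norm_zero] at hc1; linarith
      set b := c⁻¹ • a with hb
      have h0 : (0:A) ∈ Aplus := by simpa using hadd 1 h1 (-1) (hneg 1 h1)
      obtain ⟨ε, hε, hball⟩ := Metric.isOpen_iff.mp hopen 0 h0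
      obtain ⟨C, hC⟩ := ha
      have hbm : ∀ m : ℕ, ‖b ^ m‖ ≤ (‖c‖⁻¹) ^ m * C := by
        intro m
        rw [hb, smul_pow, norm_smul, norm_pow, norm_inv]
        exact mul_le_mul_of_nonneg_left (hC m) (by positivity)
      have hlt : ‖c‖⁻¹ < 1 := by
        rw [inv_lt_one_iff₀]; right; exact hc1
      have htend : Filter.Tendsto (fun m : ℕ => (‖c‖⁻¹) ^ m * C) Filter.atTop (nhds 0) := by
        simpa using
          (tendsto_pow_atTop_nhds_zero_of_lt_one (by positivity) hlt).mul_const C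
      obtain ⟨m, hm1, hm2⟩ :=
        ((htend.eventually (gt_mem_nhds hε)).and (Filter.eventually_ge_atTop 1)).exists
      have hbmA : b ^ m ∈ Aplus := by
        apply hball
        rw [Metric.mem_ball, dist_zero_right]
        exact lt_of_le_of_lt (hbm m) hm1
      have hbA : b ∈ Aplus := by
        apply hic
        refine ⟨Polynomial.X ^ m + Polynomial.C (-(b ^ m)), ?_, ?_, ?_⟩
        · exact Polynomial.monic_X_pow_add_C _ (by omega)
        · intro i
          have hm0 : m ≠ 0 := by omega
          simp only [Polynomial.coeff_add, Polynomial.coeff_X_pow, Polynomial.coeff_C]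
          by_cases h1i : i = m
          · subst h1i
            simpa [hm0] using h1
          · by_cases h2i : i = 0
            · subst h2i
              simpa [Ne.symm hm0] using hneg _ hbmA
            · simpa [h1i, h2i] using h0
        · simp
      refine Set.mem_smul.mpr ⟨c, le_of_lt hcr, b, hbA, ?_⟩
      rw [hb, smul_smul, mul_inv_cancel₀ hc0, one_smul]
  · exact fun h => h.1
end
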